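/- arXiv:2502.17058 — 2 statements merged into one kernel-verified Lean document; each statement's English description precedes it below -/
import Mathlib

section
/- Let (h_n) and (ε_n) be sequences of positive real numbers satisfying condition [B2], i.e. ε_n → 0, n·h_n·ε_n^4 → ∞ and n·h_n^2·ε_n^{-4} → 0, and condition [B3], i.e. n·h_n^{1+δ} → 0 for some constant δ ∈ (0,1). Then the set B_2 is nonempty; that is, there exists ρ ∈ (0, 1/2) such that n·h_n^{1+2ρ}·ε_n^{-2} → 0 as n → ∞. -/
open Filter Topology

/-!
Take `ρ = (1 + δ) / 4`. Then `(n h^{1+2ρ} / ε²)² = (n h² / ε⁴) · (n h^{1+δ})`, a product of two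
null sequences by [B2] and [B3]; so the nonnegative sequence `n h^{1+2ρ} / ε²` is null too.
-/

lemma Real.rpow_add_div_two_sq {x : ℝ} (hx : 0 < x) (a b : ℝ) :
    (x ^ ((a + b) / 2)) ^ 2 = x ^ a * x ^ b := by
  rw [← Real.rpow_natCast, ← Real.rpow_mul hx.le, ← Real.rpow_add hx]
  ring_nf

lemma tendsto_zero_of_sq_eq_mul {α : Type*} {l : Filter α} {u f g : α → ℝ}
    (hu : ∀ x, 0 ≤ u x) (hsq : ∀ x, u x ^ 2 = f x * g x)
    (hf : Tendsto f l (𝓝 0)) (hg : Tendsto g l (𝓝 0)) : Tendsto u l (𝓝 0) := by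
  have hsqrt : u = fun x => √(f x * g x) := by
    funext x
    rw [← hsq, Real.sqrt_sq (hu x)]
  simpa [hsqrt] using (hf.mul hg).sqrt

theorem B2_B3_implies_B2set_nonempty_general (h ε : ℕ → ℝ) (δ : ℝ)
    (hpos : ∀ n, 0 < h n) (εpos : ∀ n, 0 < ε n)
    (hδ0 : 0 < δ) (hδ1 : δ < 1)
    (h2 : Tendsto (fun n : ℕ => (n : ℝ) * h n ^ 2 / ε n ^ 4) atTop (nhds 0))
    (h3 : Tendsto (fun n : ℕ => (n : ℝ) * h n ^ (1 + δ)) atTop (nhds 0)) :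
    ∃ ρ : ℝ, 0 < ρ ∧ ρ < 1 / 2 ∧
      Tendsto (fun n : ℕ => (n : ℝ) * h n ^ (1 + 2 * ρ) / ε n ^ 2) atTop (nhds 0) := by
  refine ⟨(1 + δ) / 4, by linarith, by linarith, ?_⟩
  refine tendsto_zero_of_sq_eq_mul (fun n => by have := hpos n; positivity) (fun n => ?_) h2 h3
  have hexp : 1 + 2 * ((1 + δ) / 4) = (2 + (1 + δ)) / 2 := by ring
  have hε := (εpos n).ne'
  rw [hexp, div_pow, mul_pow, Real.rpow_add_div_two_sq (hpos n), Real.rpow_two]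
  field_simp

/-- Under conditions [B2] and [B3], the set `B₂` is nonempty: there exists
`ρ ∈ (0, 1/2)` with `n·h_n^{1+2ρ}·ε_n⁻² → 0`. -/
theorem B2_B3_implies_B2set_nonempty (h ε : ℕ → ℝ) (δ : ℝ)
    (hpos : ∀ n, 0 < h n) (εpos : ∀ n, 0 < ε n)
    (hδ0 : 0 < δ) (hδ1 : δ < 1)
    (hε0 : Tendsto ε atTop (nhds 0))
    (h1 : Tendsto (fun n : ℕ => (n : ℝ) * h n * ε n ^ 4) atTop atTop)
    (h2 : Tendsto (fun n : ℕ => (n : ℝ) * h n ^ 2 / ε n ^ 4) atTop (nhds 0))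
    (h3 : Tendsto (fun n : ℕ => (n : ℝ) * h n ^ (1 + δ)) atTop (nhds 0)) :
    ∃ ρ : ℝ, 0 < ρ ∧ ρ < 1 / 2 ∧
      Tendsto (fun n : ℕ => (n : ℝ) * h n ^ (1 + 2 * ρ) / ε n ^ 2) atTop (nhds 0) :=
  B2_B3_implies_B2set_nonempty_general h ε δ hpos εpos hδ0 hδ1 h2 h3
end

section
/- Let (h_n) and (ε_n) be sequences of positive real numbers satisfying condition [B2], i.e. ε_n → 0, n·h_n·ε_n^4 → ∞ and n·h_n^2·ε_n^{-4} → 0, and condition [B3], i.e. n·h_n^{1+δ} → 0 for a constant δ ∈ (0,1). Then the set B_3(δ) is nonempty; that is, there exists ρ ∈ (0, 1/2) such that h_n^{3ρ-1/2}·ε_n^{-1} → 0 as n → ∞, ρ ≥ (1+δ)/6 and ρ > 1/5. -/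
open Filter Topology

/-
Take ρ = 1/3, which satisfies the three numerical constraints because δ < 1. For it the limit
condition reads √h_n / ε_n → 0, and the fourth power of √h_n / ε_n is
h_n² / ε_n⁴ = (n h_n² / ε_n⁴) · n⁻¹, which tends to 0 by [B2].
-/

lemma tendsto_zero_of_tendsto_natCast_mul {a : ℕ → ℝ} {c : ℝ}
    (ha : Tendsto (fun n : ℕ => (n : ℝ) * a n) atTop (𝓝 c)) : Tendsto a atTop (𝓝 0) := by
  have hprod := ha.mul tendsto_inv_atTop_nhds_zero_nat
  rw [mul_zero] at hprod
  refine hprod.congr' ?_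
  filter_upwards [eventually_ne_atTop 0] with n hn
  field_simp

lemma tendsto_zero_of_tendsto_pow {α 𝕜 : Type*} [NormedDivisionRing 𝕜] {l : Filter α}
    {u : α → 𝕜} {k : ℕ} (hk : k ≠ 0) (hu : Tendsto (fun x => u x ^ k) l (𝓝 0)) :
    Tendsto u l (𝓝 0) := by
  rw [tendsto_zero_iff_norm_tendsto_zero] at hu ⊢
  have hroot := hu.rpow_const (p := (k : ℝ)⁻¹) (Or.inr (by positivity))
  simp only [norm_pow, Real.pow_rpow_inv_natCast (norm_nonneg _) hk] at hroot
  rwa [Real.zero_rpow (by positivity)] at hroot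

lemma rpow_half_div_pow_four {x : ℝ} (hx : 0 ≤ x) (y : ℝ) :
    (x ^ (1 / 2 : ℝ) / y) ^ 4 = x ^ 2 / y ^ 4 := by
  rw [← Real.sqrt_eq_rpow, div_pow, show 4 = 2 * 2 from rfl, pow_mul, Real.sq_sqrt hx]

theorem B2_B3_implies_B3set_nonempty_general (h ε : ℕ → ℝ) (δ : ℝ)
    (hpos : ∀ n, 0 < h n) (hδ1 : δ < 1)
    (h2 : Tendsto (fun n : ℕ => (n : ℝ) * h n ^ 2 / ε n ^ 4) atTop (nhds 0)) :
    ∃ ρ : ℝ, 0 < ρ ∧ ρ < 1 / 2 ∧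
      Tendsto (fun n : ℕ => h n ^ (3 * ρ - 1 / 2) / ε n) atTop (nhds 0) ∧
      (1 + δ) / 6 ≤ ρ ∧ 1 / 5 < ρ := by
  refine ⟨1 / 3, by norm_num, by norm_num, ?_, by linarith, by norm_num⟩
  have hsq : Tendsto (fun n => h n ^ 2 / ε n ^ 4) atTop (𝓝 0) :=
    tendsto_zero_of_tendsto_natCast_mul (by simpa only [mul_div_assoc] using h2)
  rw [show 3 * (1 / 3 : ℝ) - 1 / 2 = 1 / 2 by norm_num]
  exact tendsto_zero_of_tendsto_pow four_ne_zero
    (hsq.congr fun n => (rpow_half_div_pow_four (hpos n).le (ε n)).symm)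

/-- Under conditions [B2] and [B3], the set `B₃(δ)` is nonempty: there exists
`ρ ∈ (0, 1/2)` with `h_n^{3ρ-1/2}·ε_n⁻¹ → 0`, `ρ ≥ (1+δ)/6` and `ρ > 1/5`. -/
theorem B2_B3_implies_B3set_nonempty (h ε : ℕ → ℝ) (δ : ℝ)
    (hpos : ∀ n, 0 < h n) (εpos : ∀ n, 0 < ε n)
    (hδ0 : 0 < δ) (hδ1 : δ < 1)
    (hε0 : Tendsto ε atTop (nhds 0))
    (h1 : Tendsto (fun n : ℕ => (n : ℝ) * h n * ε n ^ 4) atTop atTop)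
    (h2 : Tendsto (fun n : ℕ => (n : ℝ) * h n ^ 2 / ε n ^ 4) atTop (nhds 0))
    (h3 : Tendsto (fun n : ℕ => (n : ℝ) * h n ^ (1 + δ)) atTop (nhds 0)) :
    ∃ ρ : ℝ, 0 < ρ ∧ ρ < 1 / 2 ∧
      Tendsto (fun n : ℕ => h n ^ (3 * ρ - 1 / 2) / ε n) atTop (nhds 0) ∧
      (1 + δ) / 6 ≤ ρ ∧ 1 / 5 < ρ :=
  B2_B3_implies_B3set_nonempty_general h ε δ hpos hδ1 h2
end
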